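/- arXiv:2202.12500 — 3 statements merged into one kernel-verified Lean document; each statement's English description precedes it below -/
import Mathlib

section
/- Let C be the free 𝔽₂[U,V]-module on generators xd, yc, xc, yd with differential ∂(xd) = ∂(yc) = U·xc + V·yd, ∂(xc) = V·xd + V·yc, ∂(yd) = U·xd + U·yc. Then the differential induced by ∂ on the quotient C/(U,V)C vanishes; consequently the homology of C/(U,V)C is a 4-dimensional 𝔽₂-vector space, with basis given by the classes of xd, xc, yd, and xd + yc, which lie in bidegrees (0,0), (1,1), (−1,−1), and (0,0) respectively (for the bigrading with gr(xd) = gr(yc) = (0,0), gr(xc) = (1,1), gr(yd) = (−1,−1)). -/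
/-!
The link Floer complex `CFL_{UV}(S²×S¹, L₂)`: free over `𝔽₂[U,V]` on
`xd, yc, xc, yd` with `∂(xd) = ∂(yc) = U·xc + V·yd`, `∂(xc) = V·xd + V·yc`,
`∂(yd) = U·xd + U·yc`.  The differential induced on the quotient `C/(U,V)C`
vanishes, so the homology of `C/(U,V)C` is the 4-dimensional `𝔽₂`-vector space
`C/(U,V)C` itself, with basis the classes of `xd, xc, yd, xd + yc`, which lie
in bidegrees `(0,0), (1,1), (-1,-1), (0,0)`.
-/

open MvPolynomial

noncomputable section

abbrev F2 := ZMod 2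
abbrev R2 := MvPolynomial (Fin 2) F2

def U : R2 := X 0
def V : R2 := X 1

/-- The matrix of the differential; generators: `0 = xd`, `1 = yc`, `2 = xc`, `3 = yd`.
The `i`-th column records `∂` of the `i`-th generator. -/
def Dmat : Matrix (Fin 4) (Fin 4) R2 :=
  !![0, 0, V, U;
     0, 0, V, U;
     U, U, 0, 0;
     V, V, 0, 0]

/-- The generators `xd, yc, xc, yd`. -/
def gen (i : Fin 4) : Fin 4 → R2 := Pi.single i 1

/-- The bidegrees of the generators: `gr(xd) = (0,0)`, `gr(yc) = (0,0)`,
`gr(xc) = (1,1)`, `gr(yd) = (-1,-1)`. -/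
def grGen : Fin 4 → ℤ × ℤ := ![(0, 0), (0, 0), (1, 1), (-1, -1)]

/-- The subspace of homogeneous elements of bidegree `g`. -/
def Homog (g : ℤ × ℤ) : Submodule F2 (Fin 4 → R2) :=
  Submodule.span F2
    {v | ∃ (i : Fin 4) (a b : ℕ),
      v = (U ^ a * V ^ b) • gen i ∧
        grGen i + (a : ℤ) • ((-2 : ℤ), (-1 : ℤ)) + (b : ℤ) • ((0 : ℤ), (1 : ℤ)) = g}

/-- Reduction mod `(U, V)`, i.e. evaluation `U ↦ 0`, `V ↦ 0`. -/
def ε : R2 →ₐ[F2] F2 := aeval 0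

/-- The quotient map `C → C/(U,V)C`, identifying `C/(U,V)C` with `Fin 4 → 𝔽₂`. -/
def q : (Fin 4 → R2) → (Fin 4 → F2) := fun v i => ε (v i)

theorem ε_X (i : Fin 2) : ε (X i) = 0 := by
  simp [ε]

theorem Dmat_map_ε : Dmat.map ε = 0 := by
  ext i j
  fin_cases i <;> fin_cases j <;> simp [Dmat, U, V, ε_X]

theorem q_add (v w : Fin 4 → R2) : q (v + w) = q v + q w := by
  ext i
  simp [q]

theorem q_gen (i : Fin 4) : q (gen i) = Pi.single i 1 := by
  ext j
  rcases eq_or_ne j i with rfl | h <;> simp [q, gen, *]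

def quotientBasisFamily : Fin 4 → Fin 4 → F2 :=
  ![q (gen 0), q (gen 2), q (gen 3), q (gen 0 + gen 1)]

/-- Up to reordering, `quotientBasisFamily` is the standard basis with `e₀` added to `e₁`. -/
theorem linearIndependent_quotientBasisFamily : LinearIndependent F2 quotientBasisFamily := by
  let shear : Fin 4 → Fin 4 → F2 :=
    (fun k => Pi.single k 1) + fun k => (Pi.single 1 1 : Fin 4 → F2) k • Pi.single 0 1
  have hshear : LinearIndependent F2 shear :=
    (linearIndependent_add_smul_iff (by simp)).2 (Pi.linearIndependent_single_one (Fin 4) F2)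
  let σ : Fin 4 ≃ Fin 4 := ⟨![0, 2, 3, 1], ![0, 3, 1, 2], by decide, by decide⟩
  have hfamily : quotientBasisFamily = shear ∘ σ := by
    ext k : 1
    fin_cases k <;> simp [quotientBasisFamily, shear, σ, q_add, q_gen, add_comm]
  rw [hfamily]
  exact hshear.comp σ σ.injective

theorem gen_mem_Homog (i : Fin 4) : gen i ∈ Homog (grGen i) :=
  Submodule.subset_span ⟨i, 0, 0, by simp, by simp⟩

/-- The differential induced on `C/(U,V)C` vanishes; hence the homology of
`C/(U,V)C` is `C/(U,V)C` itself, a 4-dimensional `𝔽₂`-vector space with basis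
the classes of `xd`, `xc`, `yd`, `xd + yc`, which lie in bidegrees
`(0,0)`, `(1,1)`, `(-1,-1)`, `(0,0)` respectively. -/
theorem stmt1 :
    Dmat.map ε = 0 ∧
      Module.finrank F2 (Fin 4 → F2) = 4 ∧
      (∃ B : Module.Basis (Fin 4) F2 (Fin 4 → F2),
        B 0 = q (gen 0) ∧ B 1 = q (gen 2) ∧ B 2 = q (gen 3) ∧
          B 3 = q (gen 0 + gen 1)) ∧
      gen 0 ∈ Homog (0, 0) ∧ gen 2 ∈ Homog (1, 1) ∧ gen 3 ∈ Homog (-1, -1) ∧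
      gen 0 + gen 1 ∈ Homog (0, 0) := by
  have hrank : Module.finrank F2 (Fin 4 → F2) = 4 := Module.finrank_fin_fun F2
  let B := basisOfLinearIndependentOfCardEqFinrank linearIndependent_quotientBasisFamily
    (by rw [hrank, Fintype.card_fin])
  have hB : ⇑B = quotientBasisFamily := coe_basisOfLinearIndependentOfCardEqFinrank _ _
  refine ⟨Dmat_map_ε, hrank, ⟨B, ?_, ?_, ?_, ?_⟩, gen_mem_Homog 0, gen_mem_Homog 2,
    gen_mem_Homog 3, add_mem (gen_mem_Homog 0) (gen_mem_Homog 1)⟩ <;> rw [hB] <;> rfl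

end
end

section
/- Let (C, ∂) be a chain complex of free modules over 𝔽₂[U,V], let C^st = C ⊕ C with differential ∂^st(x, y) = (∂x + UV·y, ∂y), and let S⁺: C → C^st be the chain map x ↦ (x, 0). Let A = 𝔽₂[U, U⁻¹] regarded as an 𝔽₂[U,V]-algebra via V ↦ 0 and U ↦ U. Then the base-changed differential on C^st ⊗_{𝔽₂[U,V]} A is the direct-sum differential ∂ ⊕ ∂, the base-changed map S⁺ ⊗ id is a split injection of chain complexes over A, and hence S⁺ ⊗ id induces an injective map on homology. The same conclusions hold with the roles of U and V exchanged, i.e. for the base change to 𝔽₂[V, V⁻¹] via U ↦ 0. -/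
/-!
Both `𝔽₂[U, U⁻¹]` (where `V ↦ 0`) and `𝔽₂[V, V⁻¹]` (where `U ↦ 0`) kill `U·V`, so after
base change the off-diagonal term `UV·y` of `∂^st` vanishes and `∂^st` becomes `∂ ⊕ ∂`.
The first projection is then a chain retraction of `S⁺`, and a chain map admitting a chain
retraction is injective on homology: if `S⁺x = ∂^st w`, then `x = ∂(pr₁ w)`.
-/

open MvPolynomial TensorProduct

noncomputable section

/-- The stabilized differential `∂^st(x, y) = (∂x + UV·y, ∂y)` on `C^st = C ⊕ C`. -/
def stab {C : Type*} [AddCommGroup C] [Module R2 C] (d : C →ₗ[R2] C) :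
    (C × C) →ₗ[R2] (C × C) :=
  LinearMap.prod (d ∘ₗ LinearMap.fst R2 C C + (U * V) • LinearMap.snd R2 C C)
    (d ∘ₗ LinearMap.snd R2 C C)

/-- `𝔽₂[U, U⁻¹]`, as an `𝔽₂[U,V]`-algebra via `U ↦ U`, `V ↦ 0`. -/
def LPU : Type := LaurentPolynomial F2

instance : CommRing LPU := inferInstanceAs (CommRing (LaurentPolynomial F2))
instance : Algebra F2 LPU := inferInstanceAs (Algebra F2 (LaurentPolynomial F2))
instance : Algebra R2 LPU :=
  RingHom.toAlgebra
    (aeval ![(id (LaurentPolynomial.T 1) : LPU), 0] : R2 →ₐ[F2] LPU).toRingHom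

/-- `𝔽₂[V, V⁻¹]`, as an `𝔽₂[U,V]`-algebra via `U ↦ 0`, `V ↦ V`. -/
def LPV : Type := LaurentPolynomial F2

instance : CommRing LPV := inferInstanceAs (CommRing (LaurentPolynomial F2))
instance : Algebra F2 LPV := inferInstanceAs (Algebra F2 (LaurentPolynomial F2))
instance : Algebra R2 LPV :=
  RingHom.toAlgebra
    (aeval ![0, (id (LaurentPolynomial.T 1) : LPV)] : R2 →ₐ[F2] LPV).toRingHom

lemma LinearMap.baseChange_smul_eq_zero {R A M N : Type*} [CommSemiring R] [Semiring A]
    [Algebra R A] [AddCommMonoid M] [Module R M] [AddCommMonoid N] [Module R N] {r : R}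
    (hr : algebraMap R A r = 0) (f : M →ₗ[R] N) : (r • f).baseChange A = 0 := by
  ext m
  simp [← algebraMap_smul A r, hr]

lemma LinearMap.fst_comp_prodMap {R M N M' N' : Type*} [Semiring R] [AddCommMonoid M]
    [Module R M] [AddCommMonoid N] [Module R N] [AddCommMonoid M'] [Module R M']
    [AddCommMonoid N'] [Module R N'] (f : M →ₗ[R] M') (g : N →ₗ[R] N') :
    LinearMap.fst R M' N' ∘ₗ f.prodMap g = f ∘ₗ LinearMap.fst R M N :=
  rfl

lemma LinearMap.mem_range_of_retraction {R M N : Type*} [Semiring R] [AddCommMonoid M]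
    [Module R M] [AddCommMonoid N] [Module R N] {i : M →ₗ[R] N} {r : N →ₗ[R] M}
    {d : M →ₗ[R] M} {D : N →ₗ[R] N} (hri : r ∘ₗ i = LinearMap.id) (hrD : r ∘ₗ D = d ∘ₗ r)
    {x : M} (hx : i x ∈ LinearMap.range D) : x ∈ LinearMap.range d := by
  obtain ⟨w, hw⟩ := hx
  refine ⟨r w, ?_⟩
  rw [← LinearMap.comp_apply, ← hrD, LinearMap.comp_apply, hw, ← LinearMap.comp_apply, hri,
    LinearMap.id_apply]

lemma stab_eq_prodMap_add {C : Type*} [AddCommGroup C] [Module R2 C] (d : C →ₗ[R2] C) :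
    stab d = d.prodMap d + (U * V) • (LinearMap.inl R2 C C ∘ₗ LinearMap.snd R2 C C) := by
  ext x <;> simp [stab]

section BaseChange

variable {A : Type} [CommRing A] [Algebra R2 A] {C : Type*} [AddCommGroup C] [Module R2 C]

lemma baseChange_stab (hUV : algebraMap R2 A (U * V) = 0) (d : C →ₗ[R2] C) :
    (stab d).baseChange A = (d.prodMap d).baseChange A := by
  rw [stab_eq_prodMap_add, LinearMap.baseChange_add, LinearMap.baseChange_smul_eq_zero hUV,
    add_zero]

lemma baseChange_fst_comp_stab (hUV : algebraMap R2 A (U * V) = 0) (d : C →ₗ[R2] C) :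
    (LinearMap.fst R2 C C).baseChange A ∘ₗ (stab d).baseChange A =
      d.baseChange A ∘ₗ (LinearMap.fst R2 C C).baseChange A := by
  rw [baseChange_stab hUV, ← LinearMap.baseChange_comp, LinearMap.fst_comp_prodMap,
    LinearMap.baseChange_comp]

lemma baseChange_fst_comp_inl :
    (LinearMap.fst R2 C C).baseChange A ∘ₗ (LinearMap.inl R2 C C).baseChange A =
      LinearMap.id := by
  rw [← LinearMap.baseChange_comp, LinearMap.fst_comp_inl, LinearMap.baseChange_id]

theorem baseChange_stab_local (hUV : algebraMap R2 A (U * V) = 0) (d : C →ₗ[R2] C) :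
    (stab d).baseChange A = (d.prodMap d).baseChange A ∧
      (∃ r : A ⊗[R2] (C × C) →ₗ[A] A ⊗[R2] C,
        r ∘ₗ (LinearMap.inl R2 C C).baseChange A = LinearMap.id ∧
        r ∘ₗ (stab d).baseChange A = d.baseChange A ∘ₗ r) ∧
      (∀ x : A ⊗[R2] C, d.baseChange A x = 0 →
        (LinearMap.inl R2 C C).baseChange A x ∈ LinearMap.range ((stab d).baseChange A) →
        x ∈ LinearMap.range (d.baseChange A)) :=
  ⟨baseChange_stab hUV d,
    ⟨_, baseChange_fst_comp_inl, baseChange_fst_comp_stab hUV d⟩,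
    fun _ _ ↦ LinearMap.mem_range_of_retraction baseChange_fst_comp_inl
      (baseChange_fst_comp_stab hUV d)⟩

end BaseChange

lemma algebraMap_U_mul_V_LPU : algebraMap R2 LPU (U * V) = 0 := by
  change aeval ![(id (LaurentPolynomial.T 1) : LPU), 0] (U * V) = 0
  simp [U, V]

lemma algebraMap_U_mul_V_LPV : algebraMap R2 LPV (U * V) = 0 := by
  change aeval ![0, (id (LaurentPolynomial.T 1) : LPV)] (U * V) = 0
  simp [U, V]

theorem stmt3_general (C : Type*) [AddCommGroup C] [Module R2 C]
    (d : C →ₗ[R2] C) :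
    -- base change to 𝔽₂[U,U⁻¹] via V ↦ 0:
    ((stab d).baseChange LPU = (d.prodMap d).baseChange LPU ∧
      (∃ r : LPU ⊗[R2] (C × C) →ₗ[LPU] LPU ⊗[R2] C,
        r ∘ₗ (LinearMap.inl R2 C C).baseChange LPU = LinearMap.id ∧
        r ∘ₗ (stab d).baseChange LPU = d.baseChange LPU ∘ₗ r) ∧
      (∀ x : LPU ⊗[R2] C, d.baseChange LPU x = 0 →
        (LinearMap.inl R2 C C).baseChange LPU x ∈
          LinearMap.range ((stab d).baseChange LPU) →
        x ∈ LinearMap.range (d.baseChange LPU))) ∧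
    -- base change to 𝔽₂[V,V⁻¹] via U ↦ 0:
    ((stab d).baseChange LPV = (d.prodMap d).baseChange LPV ∧
      (∃ r : LPV ⊗[R2] (C × C) →ₗ[LPV] LPV ⊗[R2] C,
        r ∘ₗ (LinearMap.inl R2 C C).baseChange LPV = LinearMap.id ∧
        r ∘ₗ (stab d).baseChange LPV = d.baseChange LPV ∘ₗ r) ∧
      (∀ x : LPV ⊗[R2] C, d.baseChange LPV x = 0 →
        (LinearMap.inl R2 C C).baseChange LPV x ∈
          LinearMap.range ((stab d).baseChange LPV) →
        x ∈ LinearMap.range (d.baseChange LPV))) :=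
  ⟨baseChange_stab_local algebraMap_U_mul_V_LPU d,
    baseChange_stab_local algebraMap_U_mul_V_LPV d⟩

theorem stmt3 (C : Type*) [AddCommGroup C] [Module R2 C] [Module.Free R2 C]
    (d : C →ₗ[R2] C) (hd : d ∘ₗ d = 0) :
    -- base change to 𝔽₂[U,U⁻¹] via V ↦ 0:
    ((stab d).baseChange LPU = (d.prodMap d).baseChange LPU ∧
      (∃ r : LPU ⊗[R2] (C × C) →ₗ[LPU] LPU ⊗[R2] C,
        r ∘ₗ (LinearMap.inl R2 C C).baseChange LPU = LinearMap.id ∧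
        r ∘ₗ (stab d).baseChange LPU = d.baseChange LPU ∘ₗ r) ∧
      (∀ x : LPU ⊗[R2] C, d.baseChange LPU x = 0 →
        (LinearMap.inl R2 C C).baseChange LPU x ∈
          LinearMap.range ((stab d).baseChange LPU) →
        x ∈ LinearMap.range (d.baseChange LPU))) ∧
    -- base change to 𝔽₂[V,V⁻¹] via U ↦ 0:
    ((stab d).baseChange LPV = (d.prodMap d).baseChange LPV ∧
      (∃ r : LPV ⊗[R2] (C × C) →ₗ[LPV] LPV ⊗[R2] C,
        r ∘ₗ (LinearMap.inl R2 C C).baseChange LPV = LinearMap.id ∧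
        r ∘ₗ (stab d).baseChange LPV = d.baseChange LPV ∘ₗ r) ∧
      (∀ x : LPV ⊗[R2] C, d.baseChange LPV x = 0 →
        (LinearMap.inl R2 C C).baseChange LPV x ∈
          LinearMap.range ((stab d).baseChange LPV) →
        x ∈ LinearMap.range (d.baseChange LPV))) :=
  stmt3_general C d

end
end

section
/- Let E be the free 𝔽₂[U,V]-module on generators a, b, c, d, x with differential ∂a = U·b + V·c, ∂b = V·d, ∂c = U·d, ∂d = 0, ∂x = 0, and let Ê = E/(U,V)E, a 5-dimensional 𝔽₂-vector space with vanishing induced differential. Let Φ̂, Ψ̂: Ê → Ê be the 𝔽₂-linear maps induced by the 𝔽₂[U,V]-linear maps Φ (a ↦ b, c ↦ d, other generators to 0) and Ψ (a ↦ c, b ↦ d, other generators to 0). Then the four endomorphisms id, Φ̂, Ψ̂, id + Φ̂∘Ψ̂ of Ê are linearly independent over 𝔽₂; in particular, since the differential on Ê vanishes, they are linearly independent up to chain homotopy. -/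
/-!
The hat-flavored knot Floer complex `Ê = E/(U,V)E` of the figure-eight knot:
a 5-dimensional `𝔽₂`-vector space (generators `a, b, c, d, x`) with vanishing
induced differential, carrying the induced basepoint actions `Φ̂` (`a ↦ b`,
`c ↦ d`) and `Ψ̂` (`a ↦ c`, `b ↦ d`).  The four endomorphisms
`id, Φ̂, Ψ̂, id + Φ̂∘Ψ̂` are linearly independent over `𝔽₂`; in particular, since
the differential on `Ê` vanishes, they are linearly independent up to chain
homotopy.
-/

open MvPolynomial

noncomputable section

/-- Matrix of the differential of `E`; generators `0 = a`, `1 = b`, `2 = c`,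
`3 = d`, `4 = x`; `∂a = U·b + V·c`, `∂b = V·d`, `∂c = U·d`, `∂d = 0`, `∂x = 0`. -/
def DmatE : Matrix (Fin 5) (Fin 5) R2 :=
  !![0, 0, 0, 0, 0;
     U, 0, 0, 0, 0;
     V, 0, 0, 0, 0;
     0, V, U, 0, 0;
     0, 0, 0, 0, 0]

/-- Matrix of `Φ : E → E` (`a ↦ b`, `c ↦ d`, other generators to 0). -/
def PhimatE : Matrix (Fin 5) (Fin 5) R2 :=
  !![0, 0, 0, 0, 0;
     1, 0, 0, 0, 0;
     0, 0, 0, 0, 0;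
     0, 0, 1, 0, 0;
     0, 0, 0, 0, 0]

/-- Matrix of `Ψ : E → E` (`a ↦ c`, `b ↦ d`, other generators to 0). -/
def PsimatE : Matrix (Fin 5) (Fin 5) R2 :=
  !![0, 0, 0, 0, 0;
     0, 0, 0, 0, 0;
     1, 0, 0, 0, 0;
     0, 1, 0, 0, 0;
     0, 0, 0, 0, 0]

/-- The endomorphism `Φ̂` of `Ê = E/(U,V)E ≅ 𝔽₂⁵` induced by `Φ`. -/
def Φhat : (Fin 5 → F2) →ₗ[F2] (Fin 5 → F2) := Matrix.toLin' (PhimatE.map ⇑ε)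

/-- The endomorphism `Ψ̂` of `Ê = E/(U,V)E ≅ 𝔽₂⁵` induced by `Ψ`. -/
def Ψhat : (Fin 5 → F2) →ₗ[F2] (Fin 5 → F2) := Matrix.toLin' (PsimatE.map ⇑ε)

/-! Every entry of the differential lies in `(U, V)`, so it dies under reduction. Evaluated
at the generator `a`, the maps `id, Φ̂, Ψ̂, id + Φ̂∘Ψ̂` give `a, b, c, a + d`, which are
linearly independent in `Ê`; a linear relation among the maps would restrict to one among
these vectors. -/

theorem LinearIndependent.of_apply {R M N ι : Type*} [CommSemiring R] [AddCommMonoid M]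
    [Module R M] [AddCommMonoid N] [Module R N] {f : ι → M →ₗ[R] N} (v : M)
    (h : LinearIndependent R fun i ↦ f i v) : LinearIndependent R f :=
  h.of_comp (LinearMap.applyₗ v)

lemma linearIndependent_single_triangular {R : Type*} [Ring R] :
    LinearIndependent R (![Pi.single 0 1, Pi.single 1 1, Pi.single 2 1,
      Pi.single 0 1 + Pi.single 3 1] : Fin 4 → Fin 5 → R) := by
  rw [Fintype.linearIndependent_iff]
  intro g hg
  have coord (k : Fin 5) := congrFun hg k
  have h0 : g 0 + g 3 = 0 := by simpa [Fin.sum_univ_four] using coord 0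
  have h1 : g 1 = 0 := by simpa [Fin.sum_univ_four] using coord 1
  have h2 : g 2 = 0 := by simpa [Fin.sum_univ_four] using coord 2
  have h3 : g 3 = 0 := by simpa [Fin.sum_univ_four] using coord 3
  rw [h3, add_zero] at h0
  intro i
  fin_cases i <;> assumption

lemma ε_U : ε U = 0 := by simp [ε, U]

lemma ε_V : ε V = 0 := by simp [ε, V]

lemma DmatE_map_ε : DmatE.map ⇑ε = 0 := by
  ext i j
  fin_cases i <;> fin_cases j <;> simp [DmatE, ε_U, ε_V]

lemma Φhat_single_zero : Φhat (Pi.single 0 1) = Pi.single 1 1 := by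
  ext i
  fin_cases i <;> simp [Φhat, PhimatE]

lemma Φhat_single_two : Φhat (Pi.single 2 1) = Pi.single 3 1 := by
  ext i
  fin_cases i <;> simp [Φhat, PhimatE]

lemma Ψhat_single_zero : Ψhat (Pi.single 0 1) = Pi.single 2 1 := by
  ext i
  fin_cases i <;> simp [Ψhat, PsimatE]

/-- The differential induced on `Ê` vanishes, and `id, Φ̂, Ψ̂, id + Φ̂∘Ψ̂` are
linearly independent over `𝔽₂` (hence, the differential on `Ê` being zero,
linearly independent up to chain homotopy). -/
theorem stmt8 :
    DmatE.map ⇑ε = 0 ∧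
      LinearIndependent F2
        ![(LinearMap.id : (Fin 5 → F2) →ₗ[F2] (Fin 5 → F2)), Φhat, Ψhat,
          LinearMap.id + Φhat ∘ₗ Ψhat] := by
  refine ⟨DmatE_map_ε, LinearIndependent.of_apply (Pi.single 0 1) ?_⟩
  have images : (fun i ↦ ![(LinearMap.id : (Fin 5 → F2) →ₗ[F2] (Fin 5 → F2)), Φhat, Ψhat,
      LinearMap.id + Φhat ∘ₗ Ψhat] i (Pi.single 0 1)) =
      ![Pi.single 0 1, Pi.single 1 1, Pi.single 2 1, Pi.single 0 1 + Pi.single 3 1] := by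
    ext i : 1
    fin_cases i <;> simp [Φhat_single_zero, Ψhat_single_zero, Φhat_single_two]
  rw [images]
  exact linearIndependent_single_triangular

end
end
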